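/- Assume (A3′): for k = 1,…,l there are σₖ ∈ Σ_{N_k} with Γᵏⱼ = Γᵏ_{σₖ⁻¹(j)} for all j and σₖ-nondegenerate relative equilibria Zᵏ(t) = e^{±J_{N_k}t/ord(σₖ)} zᵏ of the k-th cluster system; set Zᵏ ≡ 0 and σₖ = id for k > l, σ = (σ₁,…,σ_m), τ = 2π·ord(σ). Then the real vector space of τ-periodic C¹ functions w : ℝ → ℝ^{2N} that solve the decoupled linearized system Γᵏⱼ ẇᵏⱼ = J(∇²Hᵏ_{ℝ²}(Zᵏ(t))wᵏ)ⱼ for all (k,j) and satisfy σ*w(·+2π) = w is exactly the direct sum span{Ż¹,…,Żˡ} ⊕ {â : a ∈ ℝ^{2m}}, where Żᵏ denotes the function (0,…,0,d/dt Zᵏ,0,…,0) with the nonzero block in position k; in particular this solution space has dimension l + 2m. -/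

import Mathlib

noncomputable section

open Real

/-- The plane `ℝ²` with its Euclidean structure. -/
abbrev R2 : Type := EuclideanSpace ℝ (Fin 2)

/-- The standard symplectic matrix `J` (rotation by `-π/2`): `J(x₁,x₂) = (x₂,-x₁)`. -/
def Jrot (x : R2) : R2 := (WithLp.equiv 2 (Fin 2 → ℝ)).symm ![x 1, -(x 0)]

/-- The rotation `e^{θJ}` of the plane. -/
def rotate (θ : ℝ) (x : R2) : R2 :=
  (WithLp.equiv 2 (Fin 2 → ℝ)).symm
    ![Real.cos θ * x 0 + Real.sin θ * x 1, -Real.sin θ * x 0 + Real.cos θ * x 1]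

/-- The generalized Green's function `G(x,y) = -(1/2π) log|x-y| - g(x,y)`. -/
def Gf (g : R2 → R2 → ℝ) (x y : R2) : ℝ := -(1 / (2 * π)) * Real.log ‖x - y‖ - g x y

/-- `z` is a configuration of pairwise distinct points of `Ω`. -/
def Conf {ι : Type*} (Ω : Set R2) (z : ι → R2) : Prop :=
  (∀ i, z i ∈ Ω) ∧ ∀ i i', i ≠ i' → z i ≠ z i'

/-- The `m`-vortex Hamiltonian `𝓗`. -/
def mHam {m : ℕ} (g : R2 → R2 → ℝ) (Γ : Fin m → ℝ) (a : Fin m → R2) : ℝ :=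
  (∑ k, ∑ k', if k ≠ k' then Γ k * Γ k' * Gf g (a k) (a k') else 0)
    - ∑ k, Γ k ^ 2 * g (a k) (a k)

/-- Partial gradient `∇_{zᵢ} f(z) ∈ ℝ²` of a function of several planar variables. -/
def pgrad {ι : Type*} [DecidableEq ι] (f : (ι → R2) → ℝ) (z : ι → R2) (i : ι) : R2 :=
  gradient (fun p => f (Function.update z i p)) (z i)

/-- `i`-th block of the Hessian of `f` at `z` applied to `w`, `(∇²f(z)w)ᵢ ∈ ℝ²`. -/
def hessVec {ι : Type*} [Fintype ι] [DecidableEq ι] (f : (ι → R2) → ℝ) (z w : ι → R2)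
    (i : ι) : R2 :=
  gradient (fun p => fderiv ℝ f (Function.update z i p) w) (z i)

/-- Kernel of the Hessian `∇²f(z)` viewed as a map into the dual space. -/
def hessKer {ι : Type*} [Fintype ι] (f : (ι → R2) → ℝ) (z : ι → R2) :
    Submodule ℝ (ι → R2) :=
  LinearMap.ker (fderiv ℝ (fderiv ℝ f) z : (ι → R2) →ₗ[ℝ] (ι → R2) →L[ℝ] ℝ)

/-- `z : ℝ → (ι → ℝ²)` solves the vortex system `Γᵢ żᵢ = J ∇_{zᵢ} Ham(z)` on `I`. -/
def IsVortexSol {ι : Type*} [Fintype ι] [DecidableEq ι] (Γv : ι → ℝ)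
    (Ham : (ι → R2) → ℝ) (I : Set ℝ) (z : ℝ → ι → R2) : Prop :=
  ∀ t ∈ I, ∀ i, HasDerivAt (fun s => Γv i • z s i) (Jrot (pgrad Ham (z t) i)) t

/-- The whole-plane `n`-vortex Hamiltonian. -/
def planeHam {n : ℕ} (Γk : Fin n → ℝ) (z : Fin n → R2) : ℝ :=
  -(1 / (2 * π)) * ∑ j, ∑ j', if j ≠ j' then Γk j * Γk j' * Real.log ‖z j - z j'‖ else 0

/-- `Z` is a relative equilibrium `Z(t) = e^{±J t/ordσ} z⁰` of the whole-plane system. -/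
def IsRelEq {n : ℕ} (Γk : Fin n → ℝ) (ordσ : ℕ) (Z : ℝ → Fin n → R2) : Prop :=
  (∃ ω : ℝ, (ω = 1 ∨ ω = -1) ∧ ∃ z0 : Fin n → R2,
      (∀ j j', j ≠ j' → z0 j ≠ z0 j') ∧ ∀ t j, Z t j = rotate (ω * t / (ordσ : ℝ)) (z0 j)) ∧
  IsVortexSol Γk (planeHam Γk) Set.univ Z

/-- `w` solves the linearization `Γⱼẇⱼ = J(∇²H_{ℝ²}(Z(t))w)ⱼ` and is `σ`-symmetric. -/
def IsLinSol {n : ℕ} (Γk : Fin n → ℝ) (σ : Equiv.Perm (Fin n)) (Z : ℝ → Fin n → R2)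
    (w : ℝ → Fin n → R2) : Prop :=
  (∀ t j, HasDerivAt (fun s => Γk j • w s j)
      (Jrot (hessVec (planeHam Γk) (Z t) (w t) j)) t) ∧
  ∀ t j, w (t + 2 * π) (σ⁻¹ j) = w t j

/-- `σ`-nondegeneracy of a relative equilibrium: `σ*Z(·+2π) = Z` and the space of
`σ`-symmetric solutions of the linearized equation is exactly 3-dimensional. -/
def SigmaNondeg {n : ℕ} (Γk : Fin n → ℝ) (σ : Equiv.Perm (Fin n)) (Z : ℝ → Fin n → R2) :
    Prop :=
  (∀ t j, Z (t + 2 * π) (σ⁻¹ j) = Z t j) ∧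
  ∃ W : Fin 3 → ℝ → Fin n → R2,
    LinearIndependent ℝ W ∧ (∀ p, IsLinSol Γk σ Z (W p)) ∧
    ∀ w, IsLinSol Γk σ Z w → w ∈ Submodule.span ℝ (Set.range W)

/-- The `N`-vortex Hamiltonian `H` on clustered configurations. -/
def NHam {m : ℕ} {Nk : Fin m → ℕ} (g : R2 → R2 → ℝ)
    (Γc : (k : Fin m) → Fin (Nk k) → ℝ) (z : ((k : Fin m) × Fin (Nk k)) → R2) : ℝ :=
  (∑ i, ∑ i', if i ≠ i' then Γc i.1 i.2 * Γc i'.1 i'.2 * Gf g (z i) (z i') else 0)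
    - ∑ i, Γc i.1 i.2 ^ 2 * g (z i) (z i)

/-- Square of the `H¹_T` distance of two (`C¹`, `T`-periodic) curves. -/
def H1distSq {ι : Type*} [Fintype ι] (T : ℝ) (u v : ℝ → ι → R2) : ℝ :=
  ∫ t in (0:ℝ)..T,
    ((∑ i, ‖u t i - v t i‖ ^ 2) +
      ∑ i, ‖deriv (fun s => u s i) t - deriv (fun s => v s i) t‖ ^ 2)

/-- The function `F` appearing in the rescaled Hamiltonian. -/
def Ffun {m : ℕ} {Nk : Fin m → ℕ} (g : R2 → R2 → ℝ)
    (Γc : (k : Fin m) → Fin (Nk k) → ℝ) (α : Fin m → R2)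
    (z : ((k : Fin m) × Fin (Nk k)) → R2) : ℝ :=
  (∑ i, ∑ i', if i.1 ≠ i'.1 then
      Γc i.1 i.2 * Γc i'.1 i'.2 * Gf g (z i + α i.1) (z i' + α i'.1) else 0)
    - ∑ k, ∑ j, ∑ j', Γc k j * Γc k j' * g (z ⟨k, j⟩ + α k) (z ⟨k, j'⟩ + α k)

/-- The decoupled limit Hamiltonian `H₀(u) = Σₖ Hᵏ_{ℝ²}(uᵏ)`. -/
def H0 {m : ℕ} {Nk : Fin m → ℕ} (Γc : (k : Fin m) → Fin (Nk k) → ℝ)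
    (u : ((k : Fin m) × Fin (Nk k)) → R2) : ℝ :=
  ∑ k, planeHam (Γc k) (fun j => u ⟨k, j⟩)

/-- The rescaled Hamiltonian `H_r(u) = H₀(u) + F(ru) - 𝓗(α)`. -/
def Hr {m : ℕ} {Nk : Fin m → ℕ} (g : R2 → R2 → ℝ) (Γ : Fin m → ℝ)
    (Γc : (k : Fin m) → Fin (Nk k) → ℝ) (α : Fin m → R2) (r : ℝ)
    (u : ((k : Fin m) × Fin (Nk k)) → R2) : ℝ :=
  H0 Γc u + Ffun g Γc α (r • u) - mHam g Γ α

/-!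
The linearized system decouples into clusters. On a cluster carrying a relative equilibrium `Z`,
the velocity `Ż` solves the linearized equation (differentiate the equation of motion) and so do
the constants (translation invariance of `H_{ℝ²}`); as `Ż` changes sign over half a turn, these
three solutions are independent, so by `σ`-nondegeneracy they span all `σ`-symmetric solutions.
A single vortex has vanishing Hamiltonian, so its solutions are the constants. Periodicity with
period `2π ord σ` follows by iterating the `σ`-symmetry `ord σ` times.
-/

lemma R2_ext {x y : R2} (h0 : x 0 = y 0) (h1 : x 1 = y 1) : x = y := by
  ext i; fin_cases i <;> assumption

def JrotL : R2 →L[ℝ] R2 :=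
  LinearMap.toContinuousLinearMap
    { toFun := Jrot
      map_add' := fun x y => R2_ext (by simp [Jrot]) (by simp [Jrot]; ring)
      map_smul' := fun c x => R2_ext (by simp [Jrot]) (by simp [Jrot]) }

@[simp] lemma JrotL_apply (x : R2) : JrotL x = Jrot x := rfl

lemma Jrot_zero : Jrot 0 = 0 := map_zero JrotL

lemma Jrot_Jrot (x : R2) : Jrot (Jrot x) = -x := R2_ext (by simp [Jrot]) (by simp [Jrot])

lemma Jrot_injective : Function.Injective Jrot := fun x y h => by
  simpa [Jrot_Jrot] using congrArg Jrot h

lemma Jrot_smul (c : ℝ) (x : R2) : Jrot (c • x) = c • Jrot x := JrotL.map_smul c x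

lemma HasDerivAt.jrot {f : ℝ → R2} {f' : R2} {t : ℝ} (hf : HasDerivAt f f' t) :
    HasDerivAt (fun s => Jrot (f s)) (Jrot f') t :=
  JrotL.hasFDerivAt.comp_hasDerivAt t hf

lemma rotate_eq (θ : ℝ) (x : R2) : rotate θ x = Real.cos θ • x + Real.sin θ • Jrot x :=
  R2_ext (by simp [rotate, Jrot]) (by simp [rotate, Jrot]; ring)

lemma rotate_zero (x : R2) : rotate 0 x = x := by simp [rotate_eq]

lemma rotate_pi (x : R2) : rotate π x = -x := by simp [rotate_eq]

lemma rotate_neg_rotate (θ : ℝ) (x : R2) : rotate (-θ) (rotate θ x) = x :=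
  R2_ext (by simp [rotate]; linear_combination x 0 * Real.sin_sq_add_cos_sq θ)
    (by simp [rotate]; linear_combination x 1 * Real.sin_sq_add_cos_sq θ)

lemma rotate_injective (θ : ℝ) : Function.Injective (rotate θ) :=
  Function.LeftInverse.injective (rotate_neg_rotate θ)

lemma hasDerivAt_rotate_mul (α t : ℝ) (x : R2) :
    HasDerivAt (fun s => rotate (α * s) x) (α • Jrot (rotate (α * t) x)) t := by
  simp only [rotate_eq]
  have hθ := (hasDerivAt_id t).const_mul α
  refine ((hθ.cos.smul_const x).add (hθ.sin.smul_const (Jrot x))).congr_deriv ?_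
  rw [← JrotL_apply, ← JrotL_apply, map_add, map_smul, map_smul, JrotL_apply, JrotL_apply,
    Jrot_Jrot, id]
  module

open InnerProductSpace in
lemma hasDerivAt_of_forall_hasDerivAt_inner {E : Type*} [NormedAddCommGroup E]
    [InnerProductSpace ℝ E] [FiniteDimensional ℝ E] {g : ℝ → E} {g' : E} {t : ℝ}
    (h : ∀ v, HasDerivAt (fun s => ⟪g s, v⟫_ℝ) ⟪g', v⟫_ℝ t) : HasDerivAt g g' t := by
  let b := stdOrthonormalBasis ℝ E
  have hsum := HasDerivAt.fun_sum (u := Finset.univ) fun i _ => (h (b i)).smul_const (b i)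
  have hrepr (x : E) : ∑ i, ⟪x, b i⟫_ℝ • b i = x :=
    (Finset.sum_congr rfl fun i _ => by rw [real_inner_comm]).trans (b.sum_repr' x)
  simpa only [hrepr] using hsum

lemma fderiv_apply_eq_zero_of_forall_add_smul {E F : Type*} [NormedAddCommGroup E]
    [NormedSpace ℝ E] [NormedAddCommGroup F] [NormedSpace ℝ F] {f : E → F} {c : E}
    (hf : ∀ x (s : ℝ), f (x + s • c) = f x) (x : E) : fderiv ℝ f x c = 0 := by
  by_cases hd : DifferentiableAt ℝ f x
  · have hline : HasDerivAt (fun s : ℝ => x + s • c) c 0 := by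
      simpa using ((hasDerivAt_id (0 : ℝ)).smul_const c).const_add x
    have hcomp := (by simpa using hd.hasFDerivAt : HasFDerivAt f (fderiv ℝ f x) (x + (0:ℝ) • c))
      |>.comp_hasDerivAt (0 : ℝ) hline
    simp only [Function.comp_def, hf] at hcomp
    exact hcomp.unique (hasDerivAt_const 0 (f x))
  · simp [fderiv_zero_of_not_differentiableAt hd]

lemma fderiv_fderiv_apply_eq_zero_of_forall_add_smul {E F : Type*} [NormedAddCommGroup E]
    [NormedSpace ℝ E] [NormedAddCommGroup F] [NormedSpace ℝ F] {f : E → F} {c : E}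
    (hf : ∀ x (s : ℝ), f (x + s • c) = f x) (x : E) : fderiv ℝ (fderiv ℝ f) x c = 0 := by
  refine fderiv_apply_eq_zero_of_forall_add_smul (fun y s => ?_) x
  conv_rhs => rw [← funext fun y => hf y s]
  exact (fderiv_comp_add_right (s • c)).symm

def velocity {ι : Type*} (z : ℝ → ι → R2) (t : ℝ) (j : ι) : R2 := deriv (fun s => z s j) t

lemma velocity_shift {ι : Type*} {σ : Equiv.Perm ι} {Z : ℝ → ι → R2} {T : ℝ}
    (h : ∀ t j, Z (t + T) (σ⁻¹ j) = Z t j) (t : ℝ) (j : ι) :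
    velocity Z (t + T) (σ⁻¹ j) = velocity Z t j := by
  rw [velocity, ← deriv_comp_add_const]
  simp only [h]
  rfl

section PartialDerivatives

variable {ι : Type*} [Fintype ι] [DecidableEq ι]

lemma fderiv_comp_update_apply {E F : Type*} [NormedAddCommGroup E] [NormedSpace ℝ E]
    [NormedAddCommGroup F] [NormedSpace ℝ F] {g : (ι → E) → F} {z : ι → E}
    (hg : DifferentiableAt ℝ g z) (j : ι) (v : E) :
    fderiv ℝ (fun p => g (Function.update z j p)) (z j) v = fderiv ℝ g z (Pi.single j v) := by
  have hg' : HasFDerivAt g (fderiv ℝ g z) (Function.update z j (z j)) := by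
    simpa using hg.hasFDerivAt
  have hcomp : HasFDerivAt (fun p => g (Function.update z j p)) _ (z j) :=
    hg'.comp (z j) (hasFDerivAt_update z (z j))
  rw [hcomp.fderiv, ContinuousLinearMap.comp_apply]
  congr 1
  ext i : 1
  rcases eq_or_ne i j with rfl | hij <;> simp [*]

lemma inner_pgrad {f : (ι → R2) → ℝ} {z : ι → R2} (hf : DifferentiableAt ℝ f z) (j : ι)
    (v : R2) : inner ℝ (pgrad f z j) v = fderiv ℝ f z (Pi.single j v) := by
  rw [pgrad, gradient, InnerProductSpace.toDual_symm_apply, fderiv_comp_update_apply hf]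

lemma inner_hessVec {f : (ι → R2) → ℝ} {z : ι → R2}
    (hf : DifferentiableAt ℝ (fderiv ℝ f) z) (w : ι → R2) (j : ι) (v : R2) :
    inner ℝ (hessVec f z w j) v = fderiv ℝ (fderiv ℝ f) z (Pi.single j v) w := by
  have hw : DifferentiableAt ℝ (fun x => fderiv ℝ f x w) z :=
    hf.clm_apply (differentiableAt_const w)
  rw [hessVec, gradient, InnerProductSpace.toDual_symm_apply, fderiv_comp_update_apply hw,
    fderiv_clm_apply hf (differentiableAt_const w)]
  simp

lemma hasDerivAt_pgrad_comp {f : (ι → R2) → ℝ} {z : ℝ → ι → R2} {z' : ι → R2} {t : ℝ}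
    (hf : ∀ s, DifferentiableAt ℝ f (z s)) (hf2 : ContDiffAt ℝ 2 f (z t))
    (hz : HasDerivAt z z' t) (j : ι) :
    HasDerivAt (fun s => pgrad f (z s) j) (hessVec f (z t) z' j) t := by
  have hD2 : DifferentiableAt ℝ (fderiv ℝ f) (z t) :=
    (hf2.fderiv_right (m := 1) (by norm_num)).differentiableAt (by norm_num)
  refine hasDerivAt_of_forall_hasDerivAt_inner fun v => ?_
  simp only [inner_pgrad (hf _)]
  rw [inner_hessVec hD2, ← (hf2.isSymmSndFDerivAt (by simp)).eq]
  exact (ContinuousLinearMap.apply ℝ ℝ (Pi.single j v)).hasFDerivAt.comp_hasDerivAt t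
    (hD2.hasFDerivAt.comp_hasDerivAt t hz)

lemma hessVec_smul_add_const {f : (ι → R2) → ℝ} {z : ι → R2} (hf2 : ContDiffAt ℝ 2 f z)
    (hinv : ∀ (a : R2) x (s : ℝ), f (x + s • fun _ => a) = f x) (c : ℝ) (w : ι → R2) (a : R2)
    (j : ι) : hessVec f z (fun i => c • w i + a) j = c • hessVec f z w j := by
  have hD2 : DifferentiableAt ℝ (fderiv ℝ f) z :=
    (hf2.fderiv_right (m := 1) (by norm_num)).differentiableAt (by norm_num)
  refine ext_inner_right ℝ fun v => ?_
  have hw : (fun i => c • w i + a) = c • w + fun _ => a := rfl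
  rw [inner_hessVec hD2, real_inner_smul_left, inner_hessVec hD2, hw, map_add, map_smul,
    (hf2.isSymmSndFDerivAt (by simp)).eq _ (fun _ => a),
    fderiv_fderiv_apply_eq_zero_of_forall_add_smul (hinv a)]
  simp

lemma IsVortexSol.hasDerivAt_velocity {Γ : ι → ℝ} {f : (ι → R2) → ℝ} {z : ℝ → ι → R2}
    (hsol : IsVortexSol Γ f Set.univ z) (hz : Differentiable ℝ z)
    (hf : ∀ t, ContDiffAt ℝ 2 f (z t)) (t : ℝ) (j : ι) :
    HasDerivAt (fun s => Γ j • velocity z s j)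
      (Jrot (hessVec f (z t) (velocity z t) j)) t := by
  have hvel (s : ℝ) : HasDerivAt z (velocity z s) s :=
    hasDerivAt_pi.2 fun i => (differentiableAt_pi.1 (hz s) i).hasDerivAt
  have heq : (fun s => Γ j • velocity z s j) = fun s => Jrot (pgrad f (z s) j) :=
    funext fun s => ((hasDerivAt_pi.1 (hvel s) j).const_smul (Γ j)).unique (hsol s trivial j)
  rw [heq]
  exact (hasDerivAt_pgrad_comp (fun s => (hf s).differentiableAt (by norm_num)) (hf t)
    (hvel t) j).jrot

end PartialDerivatives

section PlaneHamiltonian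

variable {n : ℕ} (Γ : Fin n → ℝ)

lemma contDiffAt_planeHam {z : Fin n → R2} (hz : ∀ j j', j ≠ j' → z j ≠ z j')
    {N : WithTop ℕ∞} : ContDiffAt ℝ N (planeHam Γ) z := by
  refine contDiffAt_const.mul <| ContDiffAt.sum fun j _ => ContDiffAt.sum fun j' _ => ?_
  by_cases h : j = j'
  · simp only [h, ne_eq, not_true_eq_false, if_false]; exact contDiffAt_const
  · simp only [ne_eq, h, not_false_eq_true, if_true]
    have hne : z j - z j' ≠ 0 := sub_ne_zero.2 (hz j j' h)
    have hdiff : ContDiffAt ℝ N (fun z : Fin n → R2 => z j - z j') z :=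
      ((contDiff_apply ℝ R2 j).sub (contDiff_apply ℝ R2 j')).contDiffAt
    exact contDiffAt_const.mul ((hdiff.norm ℝ hne).log (norm_ne_zero_iff.2 hne))

lemma planeHam_add_smul_const (a : R2) (z : Fin n → R2) (s : ℝ) :
    planeHam Γ (z + s • fun _ => a) = planeHam Γ z := by
  simp [planeHam, add_sub_add_right_eq_sub]

lemma hessVec_planeHam_of_eq_one (hn : n = 1) (z w : Fin n → R2) (j : Fin n) :
    hessVec (planeHam Γ) z w j = 0 := by
  subst hn
  have hzero : planeHam Γ = fun _ => 0 := funext fun _ => by simp [planeHam]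
  simp [hessVec, hzero]

end PlaneHamiltonian

/-- `(c, a) ↦ c • v + a`; for `v = Ż` its range is `span{Ż} ⊕ {â}` on one cluster. -/
def smulAddConst {ι : Type*} (v : ℝ → ι → R2) : ℝ × R2 →ₗ[ℝ] ℝ → ι → R2 where
  toFun p t j := p.1 • v t j + p.2
  map_add' p q := by funext t j; simp only [Prod.fst_add, Prod.snd_add, Pi.add_apply]; module
  map_smul' c p := by
    funext t j
    simp only [Prod.smul_fst, Prod.smul_snd, Pi.smul_apply, RingHom.id_apply]
    module

@[simp] lemma smulAddConst_apply {ι : Type*} (v : ℝ → ι → R2) (p : ℝ × R2) (t : ℝ) (j : ι) :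
    smulAddConst v p t j = p.1 • v t j + p.2 := rfl

@[simp] lemma smulAddConst_zero_fst {ι : Type*} (v : ℝ → ι → R2) (a : R2) :
    smulAddConst v (0, a) = fun _ _ => a := by
  funext t j; simp

lemma LinearMap.range_eq_span_of_injective {K V E ι : Type*} [Field K] [AddCommGroup V]
    [Module K V] [AddCommGroup E] [Module K E] [FiniteDimensional K E] [Fintype ι]
    {Φ : E →ₗ[K] V} (hΦ : Function.Injective Φ) {W : ι → V}
    (hcard : Fintype.card ι ≤ Module.finrank K E)
    (hle : LinearMap.range Φ ≤ Submodule.span K (Set.range W)) :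
    LinearMap.range Φ = Submodule.span K (Set.range W) := by
  have := FiniteDimensional.span_of_finite K (Set.finite_range W)
  refine Submodule.eq_of_le_of_finrank_le hle ?_
  rw [LinearMap.finrank_range_of_inj hΦ]
  exact (finrank_range_le_card W).trans hcard

lemma apply_add_mul_pow_inv {α γ : Type*} {σ : Equiv.Perm α} {u : ℝ → α → γ} {T : ℝ}
    (h : ∀ t j, u (t + T) (σ⁻¹ j) = u t j) (M : ℕ) (t : ℝ) (j : α) :
    u (t + T * M) ((σ ^ M)⁻¹ j) = u t j := by
  induction M generalizing t j with
  | zero => simp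
  | succ M ih =>
    rw [pow_succ, mul_inv_rev, Equiv.Perm.mul_apply, Nat.cast_succ, mul_add_one, ← add_assoc,
      h, ih]

lemma apply_add_mul_orderOf {κ γ : Type*} {β : κ → Type*} {σ : (k : κ) → Equiv.Perm (β k)}
    {w : ℝ → (Σ k, β k) → γ} {T : ℝ} (h : ∀ t i, w (t + T) ⟨i.1, (σ i.1)⁻¹ i.2⟩ = w t i)
    (t : ℝ) : w (t + T * orderOf σ) = w t := by
  funext ⟨k, j⟩
  have hpow : σ k ^ orderOf σ = 1 := by rw [← Pi.pow_apply, pow_orderOf_eq_one]; rfl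
  simpa [hpow] using apply_add_mul_pow_inv (u := fun t j => w t ⟨k, j⟩) (σ := σ k)
    (fun t j => h t ⟨k, j⟩) (orderOf σ) t j

section RotatingConfiguration

variable {ι : Type*} {α : ℝ} {z0 : ι → R2} {Z : ℝ → ι → R2}

lemma hasDerivAt_of_rotating (hZ : ∀ t j, Z t j = rotate (α * t) (z0 j)) (t : ℝ) (j : ι) :
    HasDerivAt (fun s => Z s j) (α • Jrot (Z t j)) t := by
  simp only [hZ]
  exact hasDerivAt_rotate_mul α t (z0 j)

lemma velocity_of_rotating (hZ : ∀ t j, Z t j = rotate (α * t) (z0 j)) (t : ℝ) (j : ι) :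
    velocity Z t j = α • Jrot (Z t j) :=
  (hasDerivAt_of_rotating hZ t j).deriv

lemma differentiable_of_rotating (hZ : ∀ t j, Z t j = rotate (α * t) (z0 j)) :
    Differentiable ℝ Z :=
  fun t => differentiableAt_pi.2 fun j => (hasDerivAt_of_rotating hZ t j).differentiableAt

lemma injective_smulAddConst_velocity_of_rotating (hZ : ∀ t j, Z t j = rotate (α * t) (z0 j))
    (hα : α ≠ 0) {js : ι} (hjs : z0 js ≠ 0) : Function.Injective (smulAddConst (velocity Z)) := by
  refine (injective_iff_map_eq_zero _).2 fun ⟨c, a⟩ hca => ?_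
  have hat (t : ℝ) : c • (α • Jrot (Z t js)) + a = 0 := by
    rw [← velocity_of_rotating hZ]; exact congrFun (congrFun hca t) js
  have h0 := hat 0
  have h1 := hat (π / α)
  rw [hZ, mul_zero, rotate_zero] at h0
  rw [hZ, mul_div_cancel₀ _ hα, rotate_pi, ← neg_one_smul ℝ (z0 js), Jrot_smul] at h1
  have hq : α • Jrot (z0 js) ≠ 0 :=
    smul_ne_zero hα fun h => hjs (Jrot_injective (h.trans Jrot_zero.symm))
  have hc : (2 * c) • (α • Jrot (z0 js)) = 0 := by
    rw [← sub_eq_zero.2 (h0.trans h1.symm)]; module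
  have hc0 : c = 0 := by simpa [hq] using hc
  subst hc0
  exact Prod.ext rfl (by simpa using h0)

end RotatingConfiguration

section Cluster

variable {n : ℕ} {Γ : Fin n → ℝ} {σ : Equiv.Perm (Fin n)} {Z : ℝ → Fin n → R2}

lemma isLinSol_smulAddConst_velocity (hsol : IsVortexSol Γ (planeHam Γ) Set.univ Z)
    (hZ : Differentiable ℝ Z) (hconf : ∀ t j j', j ≠ j' → Z t j ≠ Z t j')
    (hshift : ∀ t j, Z (t + 2 * π) (σ⁻¹ j) = Z t j) (p : ℝ × R2) :
    IsLinSol Γ σ Z (smulAddConst (velocity Z) p) := by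
  obtain ⟨c, a⟩ := p
  have hC2 (t : ℝ) : ContDiffAt ℝ 2 (planeHam Γ) (Z t) := contDiffAt_planeHam Γ (hconf t)
  refine ⟨fun t j => ?_, fun t j => by simp only [smulAddConst_apply, velocity_shift hshift]⟩
  have h := ((hsol.hasDerivAt_velocity hZ hC2 t j).const_smul c).add_const (Γ j • a)
  rw [← Jrot_smul, ← hessVec_smul_add_const (hC2 t) (planeHam_add_smul_const Γ)] at h
  refine h.congr_of_eventuallyEq (Filter.Eventually.of_forall fun s => ?_)
  simp only [smulAddConst_apply, Pi.smul_apply]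
  module

lemma IsRelEq.exists_rotating {o : ℕ} (hrel : IsRelEq Γ o Z) (ho : 0 < o) :
    ∃ α ≠ 0, ∃ z0 : Fin n → R2, (∀ j j', j ≠ j' → z0 j ≠ z0 j') ∧
      ∀ t j, Z t j = rotate (α * t) (z0 j) := by
  obtain ⟨⟨ω, hω, z0, hz0, hZ⟩, -⟩ := hrel
  refine ⟨ω / o, div_ne_zero (by rcases hω with rfl | rfl <;> norm_num) (by positivity), z0, hz0,
    fun t j => by rw [hZ, div_mul_eq_mul_div]⟩

lemma IsRelEq.injective_smulAddConst_velocity {o : ℕ} (hrel : IsRelEq Γ o Z) (ho : 0 < o)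
    (hn : 2 ≤ n) : Function.Injective (smulAddConst (velocity Z)) := by
  obtain ⟨α, hα, z0, hz0, hZ⟩ := hrel.exists_rotating ho
  have h01 : (⟨0, by omega⟩ : Fin n) ≠ ⟨1, by omega⟩ := by simp
  by_cases h0 : z0 ⟨0, by omega⟩ = 0
  · exact injective_smulAddConst_velocity_of_rotating hZ hα (h0 ▸ hz0 _ _ h01.symm)
  · exact injective_smulAddConst_velocity_of_rotating hZ hα h0

lemma SigmaNondeg.isLinSol_iff {o : ℕ} (hnd : SigmaNondeg Γ σ Z) (hrel : IsRelEq Γ o Z)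
    (ho : 0 < o) (hn : 2 ≤ n) (u : ℝ → Fin n → R2) :
    IsLinSol Γ σ Z u ↔ u ∈ LinearMap.range (smulAddConst (velocity Z)) := by
  obtain ⟨hshift, W, -, -, hspan⟩ := hnd
  obtain ⟨α, -, z0, hz0, hZ⟩ := hrel.exists_rotating ho
  have hsolves := isLinSol_smulAddConst_velocity hrel.2 (differentiable_of_rotating hZ)
    (fun t j j' h => by rw [hZ, hZ]; exact (rotate_injective _).ne (hz0 j j' h)) hshift
  have hrange := LinearMap.range_eq_span_of_injective
    (hrel.injective_smulAddConst_velocity ho hn) (W := W) (by simp [Module.finrank_prod])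
    (by rintro _ ⟨p, rfl⟩; exact hspan _ (hsolves p))
  exact ⟨fun hu => hrange ▸ hspan u hu, by rintro ⟨p, rfl⟩; exact hsolves p⟩

lemma isLinSol_iff_of_eq_one (hn : n = 1) (hΓ : ∀ j, Γ j ≠ 0) (u : ℝ → Fin n → R2) :
    IsLinSol Γ σ Z u ↔ ∃ a, u = fun _ _ => a := by
  subst hn
  constructor
  · rintro ⟨hder, -⟩
    refine ⟨u 0 0, funext fun t => funext fun j => ?_⟩
    have hconst (s : ℝ) : HasDerivAt (fun s => Γ j • u s j) 0 s := by
      simpa [hessVec_planeHam_of_eq_one, Jrot_zero] using hder s j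
    have := is_const_of_deriv_eq_zero (fun s => (hconst s).differentiableAt)
      (fun s => (hconst s).deriv) t 0
    rw [Subsingleton.elim j 0] at this ⊢
    exact smul_right_injective R2 (hΓ 0) this
  · rintro ⟨a, rfl⟩
    refine ⟨fun t j => ?_, fun t j => rfl⟩
    simpa [hessVec_planeHam_of_eq_one, Jrot_zero] using hasDerivAt_const t (Γ j • a)

end Cluster

lemma funext_sigma_iff {κ : Type*} {β : κ → Type*} {γ : Type*} {w v : ℝ → (Σ k, β k) → γ} :
    w = v ↔ ∀ k, (fun t j => w t ⟨k, j⟩) = fun t j => v t ⟨k, j⟩ :=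
  ⟨by rintro rfl _; rfl,
    fun h => funext fun t => funext fun ⟨k, j⟩ => congrFun (congrFun (h k) t) j⟩

theorem statement8_general
    (m l : ℕ)
    (Nk : Fin m → ℕ)
    (hNkhead : ∀ k : Fin m, (k : ℕ) < l → 2 ≤ Nk k)
    (hNktail : ∀ k : Fin m, l ≤ (k : ℕ) → Nk k = 1)
    (Γc : (k : Fin m) → Fin (Nk k) → ℝ) (hΓc : ∀ k j, Γc k j ≠ 0)
    (σ : (k : Fin m) → Equiv.Perm (Fin (Nk k)))
    (Z : (k : Fin m) → ℝ → Fin (Nk k) → R2)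
    (hZrel : ∀ k : Fin m, (k : ℕ) < l →
      IsRelEq (Γc k) (orderOf (σ k)) (Z k) ∧ SigmaNondeg (Γc k) (σ k) (Z k))
    -- the solution set `S`
    (S : Set (ℝ → ((k : Fin m) × Fin (Nk k)) → R2))
    (hS : ∀ w, w ∈ S ↔
      ((∀ (t : ℝ) (i : (k : Fin m) × Fin (Nk k)),
          HasDerivAt (fun s => Γc i.1 i.2 • w s i)
            (Jrot (hessVec (planeHam (Γc i.1)) (Z i.1 t) (fun j => w t ⟨i.1, j⟩) i.2)) t) ∧
        (∀ (t : ℝ) (i : (k : Fin m) × Fin (Nk k)),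
          w (t + 2 * π) ⟨i.1, (σ i.1)⁻¹ i.2⟩ = w t i) ∧
        (∀ t, w (t + 2 * π * (orderOf σ : ℝ)) = w t))) :
    (∀ w, w ∈ S ↔
      ∃ (c : Fin m → ℝ) (a : Fin m → R2),
        (∀ k : Fin m, l ≤ (k : ℕ) → c k = 0) ∧
        w = fun t i => c i.1 • deriv (fun s => Z i.1 s i.2) t + a i.1) ∧
    (∀ (c c' : Fin m → ℝ) (a a' : Fin m → R2),
      (∀ k : Fin m, l ≤ (k : ℕ) → c k = 0) → (∀ k : Fin m, l ≤ (k : ℕ) → c' k = 0) →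
      (fun (t : ℝ) (i : (k : Fin m) × Fin (Nk k)) =>
          c i.1 • deriv (fun s => Z i.1 s i.2) t + a i.1)
        = (fun (t : ℝ) (i : (k : Fin m) × Fin (Nk k)) =>
          c' i.1 • deriv (fun s => Z i.1 s i.2) t + a' i.1) →
      c = c' ∧ a = a') := by
  have hcluster (k : Fin m) (u : ℝ → Fin (Nk k) → R2) :
      IsLinSol (Γc k) (σ k) (Z k) u ↔
        ∃ c a, (l ≤ (k : ℕ) → c = 0) ∧ u = smulAddConst (velocity (Z k)) (c, a) := by
    by_cases hk : (k : ℕ) < l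
    · rw [(hZrel k hk).2.isLinSol_iff (hZrel k hk).1 (orderOf_pos _) (hNkhead k hk)]
      simp [LinearMap.mem_range, eq_comm, hk]
    · rw [isLinSol_iff_of_eq_one (hNktail k (not_lt.1 hk)) (hΓc k)]
      simp [not_lt.1 hk]
  have hinj (k : Fin m) {c c' : ℝ} {a a' : R2} (hc : l ≤ (k : ℕ) → c = 0)
      (hc' : l ≤ (k : ℕ) → c' = 0)
      (h : smulAddConst (velocity (Z k)) (c, a) = smulAddConst (velocity (Z k)) (c', a')) :
      c = c' ∧ a = a' := by
    by_cases hk : (k : ℕ) < l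
    · exact Prod.ext_iff.1 ((hZrel k hk).1.injective_smulAddConst_velocity (orderOf_pos _)
        (hNkhead k hk) h)
    · have hj := congrFun (congrFun h 0) ⟨0, by rw [hNktail k (not_lt.1 hk)]; omega⟩
      obtain rfl := hc (not_lt.1 hk)
      obtain rfl := hc' (not_lt.1 hk)
      simpa using hj
  have hmem (w) : w ∈ S ↔ ∀ k, IsLinSol (Γc k) (σ k) (Z k) (fun t j => w t ⟨k, j⟩) := by
    rw [hS]
    refine ⟨fun h k => ⟨fun t j => h.1 t ⟨k, j⟩, fun t j => h.2.1 t ⟨k, j⟩⟩,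
      fun h => ⟨fun t i => (h i.1).1 t i.2, fun t i => (h i.1).2 t i.2,
        apply_add_mul_orderOf fun t i => (h i.1).2 t i.2⟩⟩
  refine ⟨fun w => ?_, fun c c' a a' hc hc' h => ?_⟩
  · simp only [hmem, hcluster, Classical.skolem, funext_sigma_iff (w := w), forall_and]
    rfl
  · have hk k := hinj k (a := a k) (a' := a' k) (hc k) (hc' k) (funext_sigma_iff.1 h k)
    exact ⟨funext fun k => (hk k).1, funext fun k => (hk k).2⟩

/-- the space of `σ`-symmetric `τ`-periodic solutions of the decoupled
linearized system is exactly `span{Ż¹,…,Żˡ} ⊕ {â : a ∈ ℝ^{2m}}` (dimension `l+2m`). -/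
theorem statement8
    (m l : ℕ) (hl : 1 ≤ l) (hlm : l ≤ m)
    (Nk : Fin m → ℕ)
    (hNkhead : ∀ k : Fin m, (k : ℕ) < l → 2 ≤ Nk k)
    (hNktail : ∀ k : Fin m, l ≤ (k : ℕ) → Nk k = 1)
    (Γc : (k : Fin m) → Fin (Nk k) → ℝ) (hΓc : ∀ k j, Γc k j ≠ 0)
    (σ : (k : Fin m) → Equiv.Perm (Fin (Nk k)))
    (hσΓ : ∀ (k : Fin m) (j : Fin (Nk k)), Γc k j = Γc k ((σ k)⁻¹ j))
    (hσtail : ∀ k : Fin m, l ≤ (k : ℕ) → σ k = 1)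
    (Z : (k : Fin m) → ℝ → Fin (Nk k) → R2)
    (hZrel : ∀ k : Fin m, (k : ℕ) < l →
      IsRelEq (Γc k) (orderOf (σ k)) (Z k) ∧ SigmaNondeg (Γc k) (σ k) (Z k))
    (hZtail : ∀ k : Fin m, l ≤ (k : ℕ) → Z k = 0)
    -- the solution set `S`
    (S : Set (ℝ → ((k : Fin m) × Fin (Nk k)) → R2))
    (hS : ∀ w, w ∈ S ↔
      ((∀ (t : ℝ) (i : (k : Fin m) × Fin (Nk k)),
          HasDerivAt (fun s => Γc i.1 i.2 • w s i)
            (Jrot (hessVec (planeHam (Γc i.1)) (Z i.1 t) (fun j => w t ⟨i.1, j⟩) i.2)) t) ∧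
        (∀ (t : ℝ) (i : (k : Fin m) × Fin (Nk k)),
          w (t + 2 * π) ⟨i.1, (σ i.1)⁻¹ i.2⟩ = w t i) ∧
        (∀ t, w (t + 2 * π * (orderOf σ : ℝ)) = w t))) :
    (∀ w, w ∈ S ↔
      ∃ (c : Fin m → ℝ) (a : Fin m → R2),
        (∀ k : Fin m, l ≤ (k : ℕ) → c k = 0) ∧
        w = fun t i => c i.1 • deriv (fun s => Z i.1 s i.2) t + a i.1) ∧
    (∀ (c c' : Fin m → ℝ) (a a' : Fin m → R2),
      (∀ k : Fin m, l ≤ (k : ℕ) → c k = 0) → (∀ k : Fin m, l ≤ (k : ℕ) → c' k = 0) →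
      (fun (t : ℝ) (i : (k : Fin m) × Fin (Nk k)) =>
          c i.1 • deriv (fun s => Z i.1 s i.2) t + a i.1)
        = (fun (t : ℝ) (i : (k : Fin m) × Fin (Nk k)) =>
          c' i.1 • deriv (fun s => Z i.1 s i.2) t + a' i.1) →
      c = c' ∧ a = a') :=
  statement8_general m l Nk hNkhead hNktail Γc hΓc σ Z hZrel S hS
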